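/- Let P be a homogeneous polynomial of degree d in n variables over ℂ and let f(W, Re(V), Im(V)) = (1/2)‖Σ_{i=1}^r w_i (v_i^t x)^d − P‖_d^2, where W = (w_i) ∈ ℝ^r and V = [v_i] ∈ ℂ^{n×r}. Then the gradient of f with respect to the real variables (W, Re(V), Im(V)) is the vector G^R = (G_1, Re(G_2), −Im(G_2)) ∈ ℝ^{r+2nr}, where G_1 = (Σ_{i=1}^r w_i Re((v_j^* v_i)^d) − Re(P̄(v_j)))_{1≤j≤r} ∈ ℝ^r and G_2 = (d Σ_{i=1}^r w_i w_j (v_i^* v_j)^{d−1} v̄_i − w_j ∇P̄(v_j))_{1≤j≤r} ∈ ℂ^{nr}. Here P̄ denotes the polynomial whose coefficients are the complex conjugates of those of P, ∇P̄ its gradient, and v^* u = Σ_k conj(v_k) u_k. -/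

import Mathlib

noncomputable section

open MvPolynomial Complex

/-- The apolar product `⟨P,Q⟩ = Σ_α conj(P_α) Q_α / C(d,α)`. -/
def apolar {n : ℕ} (P Q : MvPolynomial (Fin n) ℂ) : ℂ :=
  ∑ α ∈ P.support ∪ Q.support,
    starRingEnd ℂ (P.coeff α) * Q.coeff α / (Finsupp.multinomial α : ℂ)

/-- The `d`-th power of the linear form with coefficient vector `v`. -/
def linPow {n : ℕ} (v : Fin n → ℂ) (d : ℕ) : MvPolynomial (Fin n) ℂ :=
  (∑ i, MvPolynomial.C (v i) * MvPolynomial.X i) ^ d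

/-- The real domain: points `(W, Re V, Im V)`. -/
abbrev Dom (n r : ℕ) := (Fin r → ℝ) × (Fin r → Fin n → ℝ) × (Fin r → Fin n → ℝ)

/-- The complex vectors `vᵢ = Re(vᵢ) + i Im(vᵢ)` encoded by a point of the domain. -/
def vecOf {n r : ℕ} (p : Dom n r) : Fin r → Fin n → ℂ :=
  fun i j => (p.2.1 i j : ℂ) + (p.2.2 i j : ℂ) * Complex.I

/-- The objective function
`f(W, Re V, Im V) = (1/2) ‖Σᵢ wᵢ (vᵢᵗ x)^d − P‖_d²`. -/
def objective {n r : ℕ} (d : ℕ) (P : MvPolynomial (Fin n) ℂ) (p : Dom n r) : ℝ :=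
  (1 / 2) *
    (apolar ((∑ i, MvPolynomial.C ((p.1 i : ℂ)) * linPow (vecOf p i) d) - P)
      ((∑ i, MvPolynomial.C ((p.1 i : ℂ)) * linPow (vecOf p i) d) - P)).re

/-- Hermitian pairing `u^* w = Σ_l conj(u_l) w_l`. -/
def hdot {n : ℕ} (u w : Fin n → ℂ) : ℂ := ∑ l, starRingEnd ℂ (u l) * w l

/-- Basis direction in the `W`-part. -/
def eW {n r : ℕ} (j : Fin r) : Dom n r := (Pi.single j 1, 0, 0)

/-- Basis direction in the `Re(V)`-part. -/
def eRe {n r : ℕ} (j : Fin r) (k : Fin n) : Dom n r := (0, Pi.single j (Pi.single k 1), 0)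

/-- Basis direction in the `Im(V)`-part. -/
def eIm {n r : ℕ} (j : Fin r) (k : Fin n) : Dom n r := (0, 0, Pi.single j (Pi.single k 1))

/-! ### Auxiliary lemmas -/

section Aux

open Finset

variable {n r : ℕ}

/-! #### Basic apolar lemmas -/

lemma apolar_eq_right (P Q : MvPolynomial (Fin n) ℂ) :
    apolar P Q = ∑ α ∈ Q.support,
      starRingEnd ℂ (P.coeff α) * Q.coeff α / (Finsupp.multinomial α : ℂ) := by
  rw [apolar]
  refine (Finset.sum_subset Finset.subset_union_right ?_).symm
  intro α _ hα
  rw [MvPolynomial.notMem_support_iff] at hα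
  simp [hα]

lemma apolar_eq_left (P Q : MvPolynomial (Fin n) ℂ) :
    apolar P Q = ∑ α ∈ P.support,
      starRingEnd ℂ (P.coeff α) * Q.coeff α / (Finsupp.multinomial α : ℂ) := by
  rw [apolar]
  refine (Finset.sum_subset Finset.subset_union_left ?_).symm
  intro α _ hα
  rw [MvPolynomial.notMem_support_iff] at hα
  simp [hα]

lemma apolar_conj (P Q : MvPolynomial (Fin n) ℂ) :
    apolar Q P = starRingEnd ℂ (apolar P Q) := by
  rw [apolar, apolar, Finset.union_comm, map_sum]
  refine Finset.sum_congr rfl fun α _ => ?_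
  rw [map_div₀, map_mul]
  simp [mul_comm]

/-- apolar as an additive hom in the left argument. -/
def apolarL (Q : MvPolynomial (Fin n) ℂ) : MvPolynomial (Fin n) ℂ →+ ℂ where
  toFun P := apolar P Q
  map_zero' := by simp [apolar_eq_right]
  map_add' P₁ P₂ := by
    simp only [apolar_eq_right, ← Finset.sum_add_distrib]
    refine Finset.sum_congr rfl fun α _ => ?_
    rw [MvPolynomial.coeff_add, map_add]
    ring

/-- apolar as an additive hom in the right argument. -/
def apolarR (P : MvPolynomial (Fin n) ℂ) : MvPolynomial (Fin n) ℂ →+ ℂ where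
  toFun Q := apolar P Q
  map_zero' := by simp [apolar_eq_left]
  map_add' Q₁ Q₂ := by
    simp only [apolar_eq_left, ← Finset.sum_add_distrib]
    refine Finset.sum_congr rfl fun α _ => ?_
    rw [MvPolynomial.coeff_add]
    ring

lemma apolar_sub_left (P₁ P₂ Q : MvPolynomial (Fin n) ℂ) :
    apolar (P₁ - P₂) Q = apolar P₁ Q - apolar P₂ Q := (apolarL Q).map_sub P₁ P₂

lemma apolar_sub_right (P Q₁ Q₂ : MvPolynomial (Fin n) ℂ) :
    apolar P (Q₁ - Q₂) = apolar P Q₁ - apolar P Q₂ := (apolarR P).map_sub Q₁ Q₂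

lemma apolar_sum_left {ι : Type*} (s : Finset ι) (f : ι → MvPolynomial (Fin n) ℂ) (Q) :
    apolar (∑ i ∈ s, f i) Q = ∑ i ∈ s, apolar (f i) Q := map_sum (apolarL Q) f s

lemma apolar_sum_right {ι : Type*} (s : Finset ι) (P) (f : ι → MvPolynomial (Fin n) ℂ) :
    apolar P (∑ i ∈ s, f i) = ∑ i ∈ s, apolar P (f i) := map_sum (apolarR P) f s

lemma apolar_C_mul_left (w : ℂ) (P Q : MvPolynomial (Fin n) ℂ) :
    apolar (MvPolynomial.C w * P) Q = starRingEnd ℂ w * apolar P Q := by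
  simp only [apolar_eq_right, Finset.mul_sum]
  refine Finset.sum_congr rfl fun α _ => ?_
  rw [MvPolynomial.coeff_C_mul, map_mul]
  ring

lemma apolar_C_mul_right (w : ℂ) (P Q : MvPolynomial (Fin n) ℂ) :
    apolar P (MvPolynomial.C w * Q) = w * apolar P Q := by
  simp only [apolar_eq_left, Finset.mul_sum]
  refine Finset.sum_congr rfl fun α _ => ?_
  rw [MvPolynomial.coeff_C_mul]
  ring

/-! #### Coefficients of `linPow` and apolarity identities -/

lemma nat_multinomial_subset {α : Type*} (s t : Finset α) (f : α → ℕ) (hst : s ⊆ t)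
    (hf : ∀ a ∈ t, a ∉ s → f a = 0) : Nat.multinomial t f = Nat.multinomial s f := by
  unfold Nat.multinomial
  rw [Finset.sum_subset hst hf, Finset.prod_subset hst (fun a ha hna => by simp [hf a ha hna])]

lemma coeff_linPow (v : Fin n → ℂ) (d : ℕ) (α : Fin n →₀ ℕ)
    (hα : (α.sum fun _ e => e) = d) :
    MvPolynomial.coeff α (linPow v d) =
      (Finsupp.multinomial α : ℂ) * ∏ l, v l ^ α l := by
  classical
  rw [linPow, Finset.sum_pow_eq_sum_piAntidiag]
  have hterm : ∀ k : Fin n → ℕ,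
      ((Nat.multinomial Finset.univ k : MvPolynomial (Fin n) ℂ) *
        ∏ i, (MvPolynomial.C (v i) * MvPolynomial.X i) ^ k i)
        = MvPolynomial.monomial (Finsupp.equivFunOnFinite.symm k)
            ((Nat.multinomial Finset.univ k : ℂ) * ∏ i, v i ^ k i) := by
    intro k
    have h1 : (∏ i, (MvPolynomial.C (v i) * MvPolynomial.X i) ^ k i : MvPolynomial (Fin n) ℂ)
        = MvPolynomial.monomial (Finsupp.equivFunOnFinite.symm k) (∏ i, v i ^ k i) := by
      rw [MvPolynomial.monomial_eq]
      rw [Finsupp.prod_fintype _ _ (fun i => pow_zero _)]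
      simp only [mul_pow, ← MvPolynomial.C_pow]
      rw [Finset.prod_mul_distrib, map_prod]
      rfl
    rw [h1, ← MvPolynomial.C_eq_coe_nat, MvPolynomial.C_mul_monomial]
  rw [MvPolynomial.coeff_sum]
  rw [Finset.sum_congr rfl (fun k _ => by rw [hterm k, MvPolynomial.coeff_monomial])]
  rw [Finset.sum_eq_single (⇑α)]
  · have : Finsupp.equivFunOnFinite.symm ⇑α = α := by
      ext; simp
    rw [if_pos this, Finsupp.multinomial_eq]
    rw [nat_multinomial_subset α.support Finset.univ ⇑α (Finset.subset_univ _)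
      (fun a _ ha => by simpa using ha)]
  · intro k hk hne
    rw [if_neg]
    intro h
    apply hne
    rw [← h]; rfl
  · intro h
    exfalso
    apply h
    rw [Finset.mem_piAntidiag]
    refine ⟨?_, fun i _ => Finset.mem_univ i⟩
    rw [← hα, Finsupp.sum_fintype]
    intro i; rfl

lemma linPow_isHomogeneous (v : Fin n → ℂ) (d : ℕ) : (linPow v d).IsHomogeneous d := by
  have hsum : (∑ i, MvPolynomial.C (v i) * MvPolynomial.X i :
      MvPolynomial (Fin n) ℂ).IsHomogeneous 1 := by
    apply MvPolynomial.IsHomogeneous.sum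
    intro i _
    simpa using (MvPolynomial.isHomogeneous_X ℂ i).C_mul (v i)
  simpa [linPow] using hsum.pow d

lemma multinomial_ne_zero (α : Fin n →₀ ℕ) : (Finsupp.multinomial α : ℂ) ≠ 0 := by
  exact_mod_cast (by rw [Finsupp.multinomial_eq]; exact (Nat.multinomial_pos _ _).ne' :
    Finsupp.multinomial α ≠ 0)

lemma apolar_linPow_left (u : Fin n → ℂ) {d : ℕ} {Q : MvPolynomial (Fin n) ℂ}
    (hQ : Q.IsHomogeneous d) :
    apolar (linPow u d) Q = MvPolynomial.eval (fun l => starRingEnd ℂ (u l)) Q := by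
  rw [apolar_eq_right, MvPolynomial.eval_eq']
  refine Finset.sum_congr rfl fun α hα => ?_
  have hdeg : (α.sum fun _ e => e) = d := by
    have := hQ (MvPolynomial.mem_support_iff.mp hα)
    simpa [Finsupp.weight_apply, Finsupp.sum, mul_comm] using this
  rw [coeff_linPow u d α hdeg, map_mul, map_prod]
  have hm : starRingEnd ℂ ((Finsupp.multinomial α : ℕ) : ℂ) = (Finsupp.multinomial α : ℂ) := by
    simp
  rw [hm]
  simp only [map_pow]
  field_simp [multinomial_ne_zero]
  have hm0 := multinomial_ne_zero α
  calc _ = (∏ x, (starRingEnd ℂ) (u x) ^ α x) * MvPolynomial.coeff α Q *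
        ((Finsupp.multinomial α : ℂ) * (Finsupp.multinomial α : ℂ)⁻¹) := by ring
    _ = _ := by rw [mul_inv_cancel₀ hm0, mul_one]

lemma apolar_linPow_linPow (u v : Fin n → ℂ) (d : ℕ) :
    apolar (linPow u d) (linPow v d) = (hdot u v) ^ d := by
  rw [apolar_linPow_left u (linPow_isHomogeneous v d), linPow]
  rw [map_pow]
  congr 1
  rw [map_sum, hdot]
  refine Finset.sum_congr rfl fun l _ => ?_
  simp [mul_comm]

lemma conj_eval (v : Fin n → ℂ) (P : MvPolynomial (Fin n) ℂ) :
    starRingEnd ℂ (MvPolynomial.eval (fun l => starRingEnd ℂ (v l)) P) =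
      MvPolynomial.eval v (MvPolynomial.map (starRingEnd ℂ) P) := by
  rw [MvPolynomial.eval_map]
  rw [show MvPolynomial.eval (fun l => starRingEnd ℂ (v l)) P
      = MvPolynomial.eval₂ (RingHom.id ℂ) (fun l => starRingEnd ℂ (v l)) P from rfl]
  rw [MvPolynomial.eval₂_comp_left (starRingEnd ℂ), RingHom.comp_id]
  congr 1
  funext l; simp

lemma apolar_P_linPow (v : Fin n → ℂ) {d : ℕ} {P : MvPolynomial (Fin n) ℂ}
    (hP : P.IsHomogeneous d) :
    apolar P (linPow v d) = MvPolynomial.eval v (MvPolynomial.map (starRingEnd ℂ) P) := by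
  rw [apolar_conj, apolar_linPow_left v hP, conj_eval]

/-! #### The closed form of the objective -/

lemma objective_eq (d : ℕ) (P : MvPolynomial (Fin n) ℂ) (hP : P.IsHomogeneous d) :
    objective (n := n) (r := r) d P = fun p =>
      (1/2) * ∑ i, ∑ j, p.1 i * p.1 j * ((hdot (vecOf p i) (vecOf p j)) ^ d).re
      - ∑ j, p.1 j * (MvPolynomial.eval (vecOf p j) (MvPolynomial.map (starRingEnd ℂ) P)).re
      + (1/2) * (apolar P P).re := by
  funext p
  rw [objective]
  set A : MvPolynomial (Fin n) ℂ := ∑ i, MvPolynomial.C ((p.1 i : ℂ)) * linPow (vecOf p i) d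
    with hA
  have hAA : apolar A A = ∑ i, ∑ j, ((p.1 i : ℂ)) * ((p.1 j : ℂ)) *
      (hdot (vecOf p i) (vecOf p j)) ^ d := by
    rw [hA, apolar_sum_left]
    refine Finset.sum_congr rfl fun i _ => ?_
    rw [apolar_C_mul_left, apolar_sum_right, Finset.mul_sum]
    refine Finset.sum_congr rfl fun j _ => ?_
    rw [apolar_C_mul_right, apolar_linPow_linPow, Complex.conj_ofReal]
    ring
  have hPA : apolar P A = ∑ j, ((p.1 j : ℂ)) *
      MvPolynomial.eval (vecOf p j) (MvPolynomial.map (starRingEnd ℂ) P) := by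
    rw [hA, apolar_sum_right]
    refine Finset.sum_congr rfl fun j _ => ?_
    rw [apolar_C_mul_right, apolar_P_linPow _ hP]
  have expand : apolar (A - P) (A - P)
      = apolar A A - starRingEnd ℂ (apolar P A) - apolar P A + apolar P P := by
    rw [apolar_sub_left, apolar_sub_right, apolar_sub_right, ← apolar_conj]
    ring
  rw [expand, hAA, hPA]
  simp only [Complex.add_re, Complex.sub_re, Complex.conj_re, Complex.re_sum,
    Complex.re_ofReal_mul, mul_assoc]
  ring

/-! #### Differentiation machinery -/

def wCLM (n r : ℕ) (j : Fin r) : Dom n r →L[ℝ] ℝ :=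
  LinearMap.toContinuousLinearMap
    { toFun := fun p => p.1 j
      map_add' := fun _ _ => rfl
      map_smul' := fun _ _ => rfl }

@[simp] lemma wCLM_apply (j : Fin r) (p : Dom n r) : wCLM n r j p = p.1 j := rfl

def vecCLM (n r : ℕ) (i : Fin r) : Dom n r →L[ℝ] (Fin n → ℂ) :=
  LinearMap.toContinuousLinearMap
    { toFun := fun p => vecOf p i
      map_add' := fun p q => by
        funext l
        simp only [vecOf, Prod.fst_add, Prod.snd_add, Pi.add_apply]
        push_cast; ring
      map_smul' := fun c p => by
        funext l
        simp only [vecOf, Prod.smul_fst, Prod.smul_snd, Pi.smul_apply, smul_eq_mul,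
          RingHom.id_apply, Complex.real_smul]
        push_cast; ring }

@[simp] lemma vecCLM_apply (i : Fin r) (p : Dom n r) : vecCLM n r i p = vecOf p i := rfl

def coordCLM (n r : ℕ) (i : Fin r) (l : Fin n) : Dom n r →L[ℝ] ℂ :=
  (ContinuousLinearMap.proj l).comp (vecCLM n r i)

@[simp] lemma coordCLM_apply (i : Fin r) (l : Fin n) (p : Dom n r) :
    coordCLM n r i l p = vecOf p i l := rfl

def coordBarCLM (n r : ℕ) (i : Fin r) (l : Fin n) : Dom n r →L[ℝ] ℂ :=
  (Complex.conjCLE.toContinuousLinearMap).comp (coordCLM n r i l)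

@[simp] lemma coordBarCLM_apply (i : Fin r) (l : Fin n) (p : Dom n r) :
    coordBarCLM n r i l p = starRingEnd ℂ (vecOf p i l) := rfl

def hdotDeriv (n r : ℕ) (i j : Fin r) (p : Dom n r) : Dom n r →L[ℝ] ℂ :=
  ∑ l, (starRingEnd ℂ (vecOf p i l) • coordCLM n r j l + vecOf p j l • coordBarCLM n r i l)

lemma hdotDeriv_apply (i j : Fin r) (p e : Dom n r) :
    hdotDeriv n r i j p e = hdot (vecOf e i) (vecOf p j) + hdot (vecOf p i) (vecOf e j) := by
  simp only [hdotDeriv, ContinuousLinearMap.sum_apply, ContinuousLinearMap.add_apply,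
    ContinuousLinearMap.smul_apply, coordCLM_apply, coordBarCLM_apply, smul_eq_mul,
    hdot, Finset.sum_add_distrib]
  rw [add_comm]
  congr 1
  exact Finset.sum_congr rfl fun l _ => by ring

lemma hasFDerivAt_hdot (i j : Fin r) (p : Dom n r) :
    HasFDerivAt (fun q : Dom n r => hdot (vecOf q i) (vecOf q j)) (hdotDeriv n r i j p) p := by
  have h : ∀ l : Fin n, HasFDerivAt
      (fun q : Dom n r => starRingEnd ℂ (vecOf q i l) * vecOf q j l)
      (starRingEnd ℂ (vecOf p i l) • coordCLM n r j l + vecOf p j l • coordBarCLM n r i l) p := by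
    intro l
    exact (coordBarCLM n r i l).hasFDerivAt.mul (coordCLM n r j l).hasFDerivAt
  exact HasFDerivAt.fun_sum fun l _ => h l

lemma hasFDerivAt_cpow_nat {E : Type*} [NormedAddCommGroup E] [NormedSpace ℝ E]
    {f : E → ℂ} {f' : E →L[ℝ] ℂ} {x : E} (h : HasFDerivAt f f' x) (d : ℕ) :
    HasFDerivAt (fun y => f y ^ d) (((d : ℂ) * f x ^ (d - 1)) • f') x := by
  have h1 := ((hasDerivAt_pow d (f x)).hasFDerivAt.restrictScalars ℝ).comp x h
  convert h1 using 1
  case e'_8 => rfl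
  case e'_11 => rfl
  case e'_12 =>
    ext e
    simp [mul_comm]

def evalDerivC (n : ℕ) (Q : MvPolynomial (Fin n) ℂ) (x : Fin n → ℂ) : (Fin n → ℂ) →L[ℂ] ℂ :=
  ∑ k, MvPolynomial.eval x (MvPolynomial.pderiv k Q) • ContinuousLinearMap.proj k

lemma evalDerivC_apply (Q : MvPolynomial (Fin n) ℂ) (x y : Fin n → ℂ) :
    evalDerivC n Q x y = ∑ k, MvPolynomial.eval x (MvPolynomial.pderiv k Q) * y k := by
  simp [evalDerivC]

lemma hasFDerivAt_evalC (Q : MvPolynomial (Fin n) ℂ) (x : Fin n → ℂ) :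
    HasFDerivAt (fun y => MvPolynomial.eval y Q) (evalDerivC n Q x) x := by
  induction Q using MvPolynomial.induction_on with
  | C a =>
      have h0 : evalDerivC n (MvPolynomial.C a) x = 0 := by
        refine ContinuousLinearMap.ext fun y => ?_
        simp [evalDerivC_apply]
      rw [h0]
      exact (hasFDerivAt_const a x).congr_of_eventuallyEq
        (Filter.Eventually.of_forall fun y => by simp)
  | add p q hp hq =>
      have h0 : evalDerivC n (p + q) x = evalDerivC n p x + evalDerivC n q x := by
        refine ContinuousLinearMap.ext fun y => ?_
        simp [evalDerivC_apply, add_mul, Finset.sum_add_distrib]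
      rw [h0]
      exact (hp.add hq).congr_of_eventuallyEq
        (Filter.Eventually.of_forall fun y => by simp)
  | mul_X p i hp =>
      have hi := (ContinuousLinearMap.proj i : (Fin n → ℂ) →L[ℂ] ℂ).hasFDerivAt (x := x)
      have hmul := hp.mul hi
      have h0 : evalDerivC n (p * MvPolynomial.X i) x =
          MvPolynomial.eval x p • (ContinuousLinearMap.proj i : (Fin n → ℂ) →L[ℂ] ℂ)
            + x i • evalDerivC n p x := by
        refine ContinuousLinearMap.ext fun y => ?_
        simp only [evalDerivC_apply, ContinuousLinearMap.add_apply,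
          ContinuousLinearMap.smul_apply, ContinuousLinearMap.proj_apply, smul_eq_mul]
        rw [Finset.mul_sum]
        have hterm : ∀ k, MvPolynomial.eval x (MvPolynomial.pderiv k (p * MvPolynomial.X i)) =
            MvPolynomial.eval x (MvPolynomial.pderiv k p) * x i
              + MvPolynomial.eval x p * (if i = k then 1 else 0) := by
          intro k
          rw [MvPolynomial.pderiv_mul]
          simp only [map_add, map_mul, MvPolynomial.eval_X, MvPolynomial.pderiv_X,
            Pi.single_apply]
          rw [apply_ite (MvPolynomial.eval x)]
          simp
        simp only [hterm]
        simp only [add_mul, Finset.sum_add_distrib]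
        rw [add_comm]
        congr 1
        · rw [Finset.sum_congr rfl (fun k (_ : k ∈ Finset.univ) => show
            (MvPolynomial.eval x p * (if i = k then 1 else 0)) * y k
              = if i = k then MvPolynomial.eval x p * y k else 0 from by
            split <;> simp)]
          rw [Finset.sum_ite_eq, if_pos (Finset.mem_univ i)]
        · exact Finset.sum_congr rfl fun k _ => by ring
      rw [h0]
      exact hmul.congr_of_eventuallyEq (Filter.Eventually.of_forall fun y => by simp)

/-! #### The general directional-derivative formula -/

lemma fderiv_objective_apply (d : ℕ) (P : MvPolynomial (Fin n) ℂ) (hP : P.IsHomogeneous d)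
    (p e : Dom n r) :
    fderiv ℝ (objective d P) p e =
      (1/2) * (∑ i, ∑ j,
        ((p.1 i * p.1 j) *
            (((d : ℂ) * (hdot (vecOf p i) (vecOf p j)) ^ (d - 1)) *
              (hdot (vecOf e i) (vecOf p j) + hdot (vecOf p i) (vecOf e j))).re
          + ((hdot (vecOf p i) (vecOf p j)) ^ d).re *
              (p.1 i * e.1 j + p.1 j * e.1 i)))
      - ∑ j, (p.1 j * (∑ k, MvPolynomial.eval (vecOf p j)
              (MvPolynomial.pderiv k (MvPolynomial.map (starRingEnd ℂ) P)) * vecOf e j k).re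
          + (MvPolynomial.eval (vecOf p j) (MvPolynomial.map (starRingEnd ℂ) P)).re * e.1 j) := by
  rw [objective_eq d P hP]
  set Pb := MvPolynomial.map (starRingEnd ℂ) P with hPb
  have hre : ∀ i j : Fin r, HasFDerivAt
      (fun q : Dom n r => ((hdot (vecOf q i) (vecOf q j)) ^ d).re)
      (Complex.reCLM.comp
        (((d : ℂ) * (hdot (vecOf p i) (vecOf p j)) ^ (d - 1)) • hdotDeriv n r i j p)) p :=
    fun i j => Complex.reCLM.hasFDerivAt.comp p
      (hasFDerivAt_cpow_nat (hasFDerivAt_hdot i j p) d)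
  have hterm : ∀ i j : Fin r, HasFDerivAt
      (fun q : Dom n r => q.1 i * q.1 j * ((hdot (vecOf q i) (vecOf q j)) ^ d).re)
      (((p.1 i * p.1 j) • (Complex.reCLM.comp
          (((d : ℂ) * (hdot (vecOf p i) (vecOf p j)) ^ (d - 1)) • hdotDeriv n r i j p)))
        + ((hdot (vecOf p i) (vecOf p j)) ^ d).re •
            (p.1 i • wCLM n r j + p.1 j • wCLM n r i)) p := by
    intro i j
    have h1 : HasFDerivAt (fun q : Dom n r => q.1 i * q.1 j)
        (p.1 i • wCLM n r j + p.1 j • wCLM n r i) p :=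
      (wCLM n r i).hasFDerivAt.mul (wCLM n r j).hasFDerivAt
    exact h1.mul (hre i j)
  have hg : ∀ j : Fin r, HasFDerivAt
      (fun q : Dom n r => (MvPolynomial.eval (vecOf q j) Pb).re)
      (Complex.reCLM.comp
        (((evalDerivC n Pb (vecOf p j)).restrictScalars ℝ).comp (vecCLM n r j))) p :=
    fun j => Complex.reCLM.hasFDerivAt.comp p
      (by have h := ((hasFDerivAt_evalC Pb (vecOf p j)).restrictScalars ℝ).comp p (vecCLM n r j).hasFDerivAt; exact h)
  have hterm2 : ∀ j : Fin r, HasFDerivAt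
      (fun q : Dom n r => q.1 j * (MvPolynomial.eval (vecOf q j) Pb).re)
      ((p.1 j • (Complex.reCLM.comp
          (((evalDerivC n Pb (vecOf p j)).restrictScalars ℝ).comp (vecCLM n r j))))
        + (MvPolynomial.eval (vecOf p j) Pb).re • wCLM n r j) p :=
    fun j => (wCLM n r j).hasFDerivAt.mul (hg j)
  have htot := (((HasFDerivAt.fun_sum (fun i (_ : i ∈ Finset.univ) =>
      HasFDerivAt.fun_sum (fun j (_ : j ∈ Finset.univ) => hterm i j))).const_mul
        ((1:ℝ)/2)).sub
      (HasFDerivAt.fun_sum (fun j (_ : j ∈ Finset.univ) => hterm2 j))).add_const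
        ((1/2) * (apolar P P).re)
  have H : HasFDerivAt
      (fun p : Dom n r =>
        (1/2) * ∑ i, ∑ j, p.1 i * p.1 j * ((hdot (vecOf p i) (vecOf p j)) ^ d).re
        - ∑ j, p.1 j * (MvPolynomial.eval (vecOf p j) Pb).re
        + (1/2) * (apolar P P).re) _ p := htot
  rw [H.fderiv]
  simp only [ContinuousLinearMap.coe_sub', Pi.sub_apply, ContinuousLinearMap.coe_smul',
    Pi.smul_apply, ContinuousLinearMap.coe_sum', Finset.sum_apply,
    ContinuousLinearMap.add_apply, ContinuousLinearMap.smul_apply,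
    ContinuousLinearMap.coe_comp', Function.comp_apply,
    ContinuousLinearMap.coe_restrictScalars', Complex.reCLM_apply,
    hdotDeriv_apply, evalDerivC_apply, vecCLM_apply, wCLM_apply, smul_eq_mul]

/-! #### Directions -/

lemma hdot_conj (u v : Fin n → ℂ) : starRingEnd ℂ (hdot u v) = hdot v u := by
  rw [hdot, hdot, map_sum]
  refine Finset.sum_congr rfl fun l _ => ?_
  simp [mul_comm]

lemma hpow_re_symm (u v : Fin n → ℂ) (d : ℕ) :
    ((hdot u v) ^ d).re = ((hdot v u) ^ d).re := by
  rw [← Complex.conj_re ((hdot v u) ^ d), map_pow, hdot_conj]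

lemma vecOf_eW (j : Fin r) : vecOf (eW j : Dom n r) = fun _ _ => 0 := by
  funext i l
  simp [vecOf, eW]

lemma eW_fst (j i : Fin r) : (eW (n := n) j).1 i = if i = j then 1 else 0 := by
  simp [eW, Pi.single_apply]

lemma vecOf_eRe (j : Fin r) (k : Fin n) (i : Fin r) (l : Fin n) :
    vecOf (eRe j k : Dom n r) i l = if i = j then (if l = k then 1 else 0) else 0 := by
  by_cases hij : i = j <;> by_cases hlk : l = k <;>
    simp [vecOf, eRe, Pi.single_apply, hij, hlk]

lemma vecOf_eIm (j : Fin r) (k : Fin n) (i : Fin r) (l : Fin n) :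
    vecOf (eIm j k : Dom n r) i l =
      (if i = j then (if l = k then 1 else 0) else 0) * Complex.I := by
  by_cases hij : i = j <;> by_cases hlk : l = k <;>
    simp [vecOf, eIm, Pi.single_apply, hij, hlk]

lemma hdot_zero_left (w : Fin n → ℂ) : hdot (fun _ => 0) w = 0 := by simp [hdot]
lemma hdot_zero_right (w : Fin n → ℂ) : hdot w (fun _ => 0) = 0 := by simp [hdot]

lemma hdot_eRe_left (j : Fin r) (k : Fin n) (i : Fin r) (w : Fin n → ℂ) :
    hdot (vecOf (eRe j k : Dom n r) i) w = if i = j then w k else 0 := by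
  simp only [hdot, vecOf_eRe]
  split
  · rw [Finset.sum_congr rfl (fun l (_ : l ∈ Finset.univ) => show
      starRingEnd ℂ (if l = k then 1 else 0) * w l = if l = k then w l else 0 from by
        split <;> simp)]
    rw [Finset.sum_ite_eq', if_pos (Finset.mem_univ k)]
  · simp

lemma hdot_eRe_right (j : Fin r) (k : Fin n) (i : Fin r) (w : Fin n → ℂ) :
    hdot w (vecOf (eRe j k : Dom n r) i) = if i = j then starRingEnd ℂ (w k) else 0 := by
  simp only [hdot, vecOf_eRe]
  split
  · rw [Finset.sum_congr rfl (fun l (_ : l ∈ Finset.univ) => show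
      starRingEnd ℂ (w l) * (if l = k then 1 else 0)
        = if l = k then starRingEnd ℂ (w l) else 0 from by split <;> simp)]
    rw [Finset.sum_ite_eq', if_pos (Finset.mem_univ k)]
  · simp

lemma hdot_eIm_left (j : Fin r) (k : Fin n) (i : Fin r) (w : Fin n → ℂ) :
    hdot (vecOf (eIm j k : Dom n r) i) w
      = if i = j then -(Complex.I * w k) else 0 := by
  simp only [hdot, vecOf_eIm]
  split
  · rw [Finset.sum_congr rfl (fun l (_ : l ∈ Finset.univ) => show
      starRingEnd ℂ ((if l = k then 1 else 0) * Complex.I) * w l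
        = if l = k then -(Complex.I * w l) else 0 from by
        split <;> simp [Complex.conj_I, mul_comm])]
    rw [Finset.sum_ite_eq', if_pos (Finset.mem_univ k)]
  · simp

lemma hdot_eIm_right (j : Fin r) (k : Fin n) (i : Fin r) (w : Fin n → ℂ) :
    hdot w (vecOf (eIm j k : Dom n r) i)
      = if i = j then starRingEnd ℂ (w k) * Complex.I else 0 := by
  simp only [hdot, vecOf_eIm]
  split
  · rw [Finset.sum_congr rfl (fun l (_ : l ∈ Finset.univ) => show
      starRingEnd ℂ (w l) * ((if l = k then 1 else 0) * Complex.I)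
        = if l = k then starRingEnd ℂ (w l) * Complex.I else 0 from by
        split <;> simp)]
    rw [Finset.sum_ite_eq', if_pos (Finset.mem_univ k)]
  · simp

end Aux

/-- the gradient of `f` with respect to the real variables
`(W, Re V, Im V)` is `G^R = (G₁, Re G₂, −Im G₂)` with
`G₁ⱼ = Σᵢ wᵢ Re((vⱼ^* vᵢ)^d) − Re(P̄(vⱼ))` and
`G₂ⱼ = d Σᵢ wᵢ wⱼ (vᵢ^* vⱼ)^{d−1} v̄ᵢ − wⱼ ∇P̄(vⱼ)`. -/
theorem gradient_formula {n r : ℕ} (d : ℕ) (hd : 1 ≤ d) (P : MvPolynomial (Fin n) ℂ)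
    (hP : P.IsHomogeneous d) (p : Dom n r) :
    (∀ j : Fin r,
      fderiv ℝ (objective d P) p (eW j) =
        (∑ i, p.1 i * ((hdot (vecOf p j) (vecOf p i)) ^ d).re) -
          (MvPolynomial.eval (vecOf p j) (MvPolynomial.map (starRingEnd ℂ) P)).re) ∧
    (∀ (j : Fin r) (k : Fin n),
      fderiv ℝ (objective d P) p (eRe j k) =
        ((d : ℂ) * (∑ i, (p.1 i : ℂ) * (p.1 j : ℂ) *
            (hdot (vecOf p i) (vecOf p j)) ^ (d - 1) * starRingEnd ℂ (vecOf p i k)) -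
          (p.1 j : ℂ) *
            MvPolynomial.eval (vecOf p j)
              (MvPolynomial.pderiv k (MvPolynomial.map (starRingEnd ℂ) P))).re) ∧
    (∀ (j : Fin r) (k : Fin n),
      fderiv ℝ (objective d P) p (eIm j k) =
        -((d : ℂ) * (∑ i, (p.1 i : ℂ) * (p.1 j : ℂ) *
            (hdot (vecOf p i) (vecOf p j)) ^ (d - 1) * starRingEnd ℂ (vecOf p i k)) -
          (p.1 j : ℂ) *
            MvPolynomial.eval (vecOf p j)
              (MvPolynomial.pderiv k (MvPolynomial.map (starRingEnd ℂ) P))).im) := by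
  refine ⟨fun j => ?_, fun j k => ?_, fun j k => ?_⟩
  · rw [fderiv_objective_apply d P hP p (eW j)]
    simp only [vecOf_eW, hdot_zero_left, hdot_zero_right, add_zero, mul_zero,
      Complex.zero_re, zero_mul, zero_add, eW_fst, Finset.sum_const_zero]
    simp only [mul_add, Finset.sum_add_distrib, mul_ite, mul_one, mul_zero,
      Finset.sum_ite_eq', Finset.sum_ite_eq, Finset.sum_ite_irrel, Finset.sum_const_zero,
      Finset.mem_univ, if_true]
    rw [Finset.sum_congr rfl (fun x (_ : x ∈ Finset.univ) => show
      (hdot (vecOf p x) (vecOf p j) ^ d).re * p.1 x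
        = p.1 x * (hdot (vecOf p j) (vecOf p x) ^ d).re from by
      rw [hpow_re_symm]; ring)]
    rw [Finset.sum_congr rfl (fun x (_ : x ∈ Finset.univ) => show
      (hdot (vecOf p j) (vecOf p x) ^ d).re * p.1 x
        = p.1 x * (hdot (vecOf p j) (vecOf p x) ^ d).re from mul_comm _ _)]
    ring
  · rw [fderiv_objective_apply d P hP p (eRe j k)]
    have he1 : (eRe (n := n) j k).1 = 0 := rfl
    simp only [he1, Pi.zero_apply, mul_zero, zero_mul, add_zero, zero_add,
      hdot_eRe_left, hdot_eRe_right, vecOf_eRe]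
    simp only [mul_add, mul_ite, mul_zero, mul_one, apply_ite Complex.re,
      Complex.add_re, Complex.zero_re, Finset.sum_add_distrib, Finset.sum_ite_irrel,
      Finset.sum_ite_eq', Finset.sum_ite_eq, Finset.sum_const_zero,
      Finset.mem_univ, if_true]
    have key : ∀ x : Fin r,
        ((d:ℂ) * hdot (vecOf p j) (vecOf p x) ^ (d - 1) * vecOf p x k).re
          = ((d:ℂ) * hdot (vecOf p x) (vecOf p j) ^ (d - 1)
              * starRingEnd ℂ (vecOf p x k)).re := by
      intro x
      rw [← Complex.conj_re ((d:ℂ) * hdot (vecOf p x) (vecOf p j) ^ (d - 1)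
        * starRingEnd ℂ (vecOf p x k)), map_mul, map_mul, map_pow, hdot_conj,
        Complex.conj_conj, map_natCast]
    rw [Finset.sum_congr rfl (fun x (_ : x ∈ Finset.univ) => show
      p.1 j * p.1 x * ((d:ℂ) * hdot (vecOf p j) (vecOf p x) ^ (d - 1) * vecOf p x k).re
        = p.1 x * p.1 j * ((d:ℂ) * hdot (vecOf p x) (vecOf p j) ^ (d - 1)
            * starRingEnd ℂ (vecOf p x k)).re from by rw [key x]; ring)]
    conv_rhs => rw [Complex.sub_re, Finset.mul_sum, Complex.re_sum]
    rw [Finset.sum_congr rfl (fun x (_ : x ∈ Finset.univ) => show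
      ((d:ℂ) * (↑(p.1 x) * ↑(p.1 j) * hdot (vecOf p x) (vecOf p j) ^ (d - 1)
          * starRingEnd ℂ (vecOf p x k))).re
        = p.1 x * p.1 j * ((d:ℂ) * hdot (vecOf p x) (vecOf p j) ^ (d - 1)
            * starRingEnd ℂ (vecOf p x k)).re from by
      rw [show ((d:ℂ) * (↑(p.1 x) * ↑(p.1 j) * hdot (vecOf p x) (vecOf p j) ^ (d - 1)
          * starRingEnd ℂ (vecOf p x k)))
        = (↑(p.1 x) * (↑(p.1 j) * ((d:ℂ) * hdot (vecOf p x) (vecOf p j) ^ (d - 1)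
            * starRingEnd ℂ (vecOf p x k)))) from by ring,
        Complex.re_ofReal_mul, Complex.re_ofReal_mul, ← mul_assoc])]
    rw [Complex.re_ofReal_mul]
    ring
  · rw [fderiv_objective_apply d P hP p (eIm j k)]
    have he1 : (eIm (n := n) j k).1 = 0 := rfl
    simp only [he1, Pi.zero_apply, mul_zero, zero_mul, add_zero, zero_add,
      hdot_eIm_left, hdot_eIm_right, vecOf_eIm]
    simp only [mul_add, mul_ite, ite_mul, mul_zero, zero_mul, mul_one, one_mul,
      apply_ite Complex.re, Complex.add_re, Complex.zero_re, Finset.sum_add_distrib,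
      Finset.sum_ite_irrel, Finset.sum_ite_eq', Finset.sum_ite_eq,
      Finset.sum_const_zero, Finset.mem_univ, if_true]
    have key : ∀ x : Fin r,
        ((d:ℂ) * hdot (vecOf p j) (vecOf p x) ^ (d - 1) * -(Complex.I * vecOf p x k)).re
          = ((d:ℂ) * hdot (vecOf p x) (vecOf p j) ^ (d - 1)
              * (starRingEnd ℂ (vecOf p x k) * Complex.I)).re := by
      intro x
      rw [← Complex.conj_re ((d:ℂ) * hdot (vecOf p x) (vecOf p j) ^ (d - 1)
        * (starRingEnd ℂ (vecOf p x k) * Complex.I)), map_mul, map_mul, map_pow,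
        hdot_conj, map_mul, Complex.conj_conj, Complex.conj_I, map_natCast]
      congr 1
      ring
    rw [Finset.sum_congr rfl (fun x (_ : x ∈ Finset.univ) => show
      p.1 j * p.1 x * ((d:ℂ) * hdot (vecOf p j) (vecOf p x) ^ (d - 1)
          * -(Complex.I * vecOf p x k)).re
        = p.1 x * p.1 j * ((d:ℂ) * hdot (vecOf p x) (vecOf p j) ^ (d - 1)
            * (starRingEnd ℂ (vecOf p x k) * Complex.I)).re from by rw [key x]; ring)]
    conv_rhs => rw [← Complex.mul_I_re, sub_mul, Complex.sub_re,
      mul_assoc ((d:ℂ)), Finset.sum_mul, Finset.mul_sum, Complex.re_sum,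
      mul_assoc (((p.1 j : ℝ)) : ℂ), Complex.re_ofReal_mul]
    rw [Finset.sum_congr rfl (fun x (_ : x ∈ Finset.univ) => show
      ((d:ℂ) * (↑(p.1 x) * ↑(p.1 j) * hdot (vecOf p x) (vecOf p j) ^ (d - 1)
          * starRingEnd ℂ (vecOf p x k) * Complex.I)).re
        = p.1 x * p.1 j * ((d:ℂ) * hdot (vecOf p x) (vecOf p j) ^ (d - 1)
            * (starRingEnd ℂ (vecOf p x k) * Complex.I)).re from by
      rw [show ((d:ℂ) * (↑(p.1 x) * ↑(p.1 j) * hdot (vecOf p x) (vecOf p j) ^ (d - 1)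
          * starRingEnd ℂ (vecOf p x k) * Complex.I))
        = (↑(p.1 x) * (↑(p.1 j) * ((d:ℂ) * hdot (vecOf p x) (vecOf p j) ^ (d - 1)
            * (starRingEnd ℂ (vecOf p x k) * Complex.I)))) from by ring,
        Complex.re_ofReal_mul, Complex.re_ofReal_mul, ← mul_assoc])]
    ring

end
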